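/- For any finite sequence of real numbers a_1, ..., a_n, the maximum of Σ_i ε_i a_i over all sign vectors (ε_1,...,ε_n) ∈ {-1,+1}^n having an odd number of -1's equals Σ_i |a_i| - 2·min_i |a_i| if a_1·a_2·...·a_n > 0, and equals Σ_i |a_i| otherwise. -/

import Mathlib

open Finset

/-- Number of minus signs in a sign vector (encoded as a Boolean vector,
`true` meaning the sign `-1`). -/
def negCount {ι : Type*} [Fintype ι] [DecidableEq ι] (ε : ι → Bool) : ℕ :=
  (Finset.univ.filter (fun i => ε i = true)).card

/-- The signed sum `Σ ε_i a_i` corresponding to a sign vector. -/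
def sgnSum {ι : Type*} [Fintype ι] (a : ι → ℝ) (ε : ι → Bool) : ℝ :=
  ∑ i, (if ε i then -(a i) else a i)

/-- Sign vectors with an even number of `-1`'s. -/
def evenSigns (ι : Type*) [Fintype ι] [DecidableEq ι] : Finset (ι → Bool) :=
  Finset.univ.filter (fun ε => Even (negCount ε))

/-- Sign vectors with an odd number of `-1`'s. -/
def oddSigns (ι : Type*) [Fintype ι] [DecidableEq ι] : Finset (ι → Bool) :=
  Finset.univ.filter (fun ε => Odd (negCount ε))

lemma evenSigns_nonempty (ι : Type*) [Fintype ι] [DecidableEq ι] :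
    (evenSigns ι).Nonempty :=
  ⟨fun _ => false, by rw [evenSigns, Finset.mem_filter]; simp [negCount]⟩

lemma oddSigns_nonempty (ι : Type*) [Fintype ι] [DecidableEq ι] [Nonempty ι] :
    (oddSigns ι).Nonempty := by
  refine ⟨fun i => decide (i = Classical.arbitrary ι), ?_⟩
  rw [oddSigns, Finset.mem_filter]; simp [negCount, Finset.filter_eq']

/-- `s_even`: maximum of signed sums over sign vectors with evenly many minuses. -/
noncomputable def sEven {ι : Type*} [Fintype ι] [DecidableEq ι] (a : ι → ℝ) : ℝ :=
  (evenSigns ι).sup' (evenSigns_nonempty ι) (sgnSum a)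

/-- `s_odd`: maximum of signed sums over sign vectors with oddly many minuses. -/
noncomputable def sOdd {ι : Type*} [Fintype ι] [DecidableEq ι] [Nonempty ι] (a : ι → ℝ) : ℝ :=
  (oddSigns ι).sup' (oddSigns_nonempty ι) (sgnSum a)

/-! Relative to `signVector a`, which attains `∑ |a i|`, a sign vector loses exactly `2 |a i|` at
each coordinate where it disagrees with it, and the parity of its number of minus signs changes by
the parity of the number of disagreements. If `∏ a i < 0`, `signVector a` has an odd number of minus
signs and is itself admissible. Otherwise an odd sign vector must disagree somewhere, and flipping
only a coordinate of least `|a i|` is optimal; when moreover `∏ a i = 0`, that least value is `0`. -/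

noncomputable def signVector {ι : Type*} (a : ι → ℝ) : ι → Bool := fun i => decide (a i < 0)

section SignedSums
variable {ι : Type*} [Fintype ι]

theorem sgnSum_eq_sum_abs_sub (a : ι → ℝ) (ε : ι → Bool) :
    sgnSum a ε = ∑ i, |a i| - 2 * ∑ i ∈ {i | ε i ≠ signVector a i}, |a i| := by
  rw [sgnSum, sum_filter, mul_sum, ← sum_sub_distrib]
  refine sum_congr rfl fun i _ => ?_
  by_cases ha : a i < 0 <;> cases ε i <;>
    simp [signVector, ha, abs_of_neg, abs_of_nonneg, not_lt.1] <;> ring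

theorem sgnSum_le_sum_abs (a : ι → ℝ) (ε : ι → Bool) : sgnSum a ε ≤ ∑ i, |a i| := by
  rw [sgnSum_eq_sum_abs_sub]
  linarith [sum_nonneg fun i (_ : i ∈ ({i | ε i ≠ signVector a i} : Finset ι)) => abs_nonneg (a i)]

theorem sgnSum_signVector (a : ι → ℝ) : sgnSum a (signVector a) = ∑ i, |a i| := by
  simp [sgnSum_eq_sum_abs_sub]

end SignedSums

section Parity
variable {ι : Type*} [Fintype ι] [DecidableEq ι]

theorem negCount_add_negCount (ε δ : ι → Bool) :
    negCount ε + negCount δ = #{i | ε i ≠ δ i} + 2 * #{i | ε i ∧ δ i} := by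
  simp only [negCount, card_filter, mul_sum, ← sum_add_distrib]
  refine sum_congr rfl fun i _ => ?_
  cases ε i <;> cases δ i <;> rfl

theorem even_negCount_add_iff (ε δ : ι → Bool) :
    Even (negCount ε + negCount δ) ↔ Even #{i | ε i ≠ δ i} := by
  simp [negCount_add_negCount, Nat.even_add]

theorem filter_update_not_ne (δ : ι → Bool) (j : ι) :
    ({i | Function.update δ j (!δ j) i ≠ δ i} : Finset ι) = {j} := by
  ext i
  by_cases h : i = j <;> simp [h]

theorem even_negCount_update_not_iff (δ : ι → Bool) (j : ι) :
    Even (negCount (Function.update δ j (!δ j))) ↔ ¬ Even (negCount δ) := by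
  have := even_negCount_add_iff (Function.update δ j (!δ j)) δ
  rw [filter_update_not_ne, card_singleton, Nat.even_add] at this
  simp only [Nat.not_even_one, iff_false] at this
  tauto

theorem sgnSum_update_signVector (a : ι → ℝ) (j : ι) :
    sgnSum a (Function.update (signVector a) j (!signVector a j)) = ∑ i, |a i| - 2 * |a j| := by
  rw [sgnSum_eq_sum_abs_sub, filter_update_not_ne, sum_singleton]

theorem prod_eq_neg_one_pow_mul_prod_abs (a : ι → ℝ) :
    ∏ i, a i = (-1) ^ negCount (signVector a) * ∏ i, |a i| := by
  calc ∏ i, a i = ∏ i, ((if a i < 0 then -1 else 1) * |a i|) := by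
        refine prod_congr rfl fun i _ => ?_
        split_ifs with h
        · simp [abs_of_neg h]
        · simp [abs_of_nonneg (not_lt.1 h)]
    _ = (-1) ^ negCount (signVector a) * ∏ i, |a i| := by
        rw [prod_mul_distrib, prod_ite, prod_const, prod_const_one, mul_one]
        simp [negCount, signVector]

theorem even_negCount_signVector_of_prod_pos {a : ι → ℝ} (h : 0 < ∏ i, a i) :
    Even (negCount (signVector a)) := by
  by_contra hodd
  rw [prod_eq_neg_one_pow_mul_prod_abs, (Nat.not_even_iff_odd.1 hodd).neg_one_pow] at h
  linarith [prod_nonneg fun i (_ : i ∈ univ) => abs_nonneg (a i)]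

theorem prod_nonneg_of_even_negCount_signVector {a : ι → ℝ}
    (h : Even (negCount (signVector a))) : 0 ≤ ∏ i, a i := by
  rw [prod_eq_neg_one_pow_mul_prod_abs, h.neg_one_pow, one_mul]
  exact prod_nonneg fun i _ => abs_nonneg (a i)

end Parity

section OddMaximum
variable {ι : Type*} [Fintype ι] [DecidableEq ι] [Nonempty ι]

theorem sgnSum_le_sOdd (a : ι → ℝ) {ε : ι → Bool} (hε : Odd (negCount ε)) :
    sgnSum a ε ≤ sOdd a :=
  le_sup' (sgnSum a) (mem_filter.2 ⟨mem_univ ε, hε⟩)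

theorem sOdd_le_sum_abs (a : ι → ℝ) : sOdd a ≤ ∑ i, |a i| :=
  sup'_le _ _ fun ε _ => sgnSum_le_sum_abs a ε

theorem sOdd_eq_sum_abs_of_odd {a : ι → ℝ} (h : Odd (negCount (signVector a))) :
    sOdd a = ∑ i, |a i| :=
  le_antisymm (sOdd_le_sum_abs a) (sgnSum_signVector a ▸ sgnSum_le_sOdd a h)

theorem sum_abs_sub_two_mul_abs_le_sOdd {a : ι → ℝ} (h : Even (negCount (signVector a)))
    (j : ι) : ∑ i, |a i| - 2 * |a j| ≤ sOdd a := by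
  rw [← sgnSum_update_signVector]
  refine sgnSum_le_sOdd a ?_
  rw [← Nat.not_even_iff_odd, even_negCount_update_not_iff, not_not]
  exact h

theorem sOdd_le_of_even {a : ι → ℝ} (h : Even (negCount (signVector a))) :
    sOdd a ≤ ∑ i, |a i| - 2 * univ.inf' univ_nonempty (fun i => |a i|) := by
  refine sup'_le _ _ fun ε hε => ?_
  have hodd : Odd #{i | ε i ≠ signVector a i} := by
    rw [← Nat.not_even_iff_odd, ← even_negCount_add_iff, Nat.even_add]
    exact fun hiff => Nat.not_even_iff_odd.2 (mem_filter.1 hε).2 (hiff.2 h)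
  obtain ⟨i₀, hi₀⟩ := card_pos.1 hodd.pos
  have hmin : univ.inf' univ_nonempty (fun i => |a i|) ≤ |a i₀| := inf'_le _ (mem_univ i₀)
  have hsingle : |a i₀| ≤ ∑ i ∈ {i | ε i ≠ signVector a i}, |a i| :=
    single_le_sum (fun i _ => abs_nonneg (a i)) hi₀
  rw [sgnSum_eq_sum_abs_sub]
  linarith

end OddMaximum

theorem sOdd_eq {ι : Type*} [Fintype ι] [DecidableEq ι] [Nonempty ι] (a : ι → ℝ) :
    ((0 < ∏ i, a i) →
      sOdd a = ∑ i, |a i| - 2 * Finset.univ.inf' Finset.univ_nonempty (fun i => |a i|)) ∧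
    (¬ (0 < ∏ i, a i) → sOdd a = ∑ i, |a i|) := by
  constructor
  · intro hpos
    have heven := even_negCount_signVector_of_prod_pos hpos
    obtain ⟨j, -, hj⟩ := exists_mem_eq_inf' univ_nonempty (fun i => |a i|)
    exact le_antisymm (sOdd_le_of_even heven) (hj ▸ sum_abs_sub_two_mul_abs_le_sOdd heven j)
  · intro hnonpos
    rcases Nat.even_or_odd (negCount (signVector a)) with heven | hodd
    · have hzero : ∏ i, a i = 0 :=
        le_antisymm (not_lt.1 hnonpos) (prod_nonneg_of_even_negCount_signVector heven)
      obtain ⟨j, -, hj⟩ := prod_eq_zero_iff.1 hzero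
      refine le_antisymm (sOdd_le_sum_abs a) ?_
      simpa [hj] using sum_abs_sub_two_mul_abs_le_sOdd heven j
    · exact sOdd_eq_sum_abs_of_odd hodd
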